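/- The Fejér kernel F(x) := (1/2)·sinc²(x/2) satisfies M_β(F) := sup_{u∈ℝ} ∑_{k∈ℤ} |u−k|^β |F(u−k)| < ∞ for every 0 < β < 1, while M₁(F) = +∞. -/

import Mathlib

open Real

/-- The normalized sinc function: `sinc x = sin(πx)/(πx)` for `x ≠ 0`, `sinc 0 = 1`. -/
noncomputable def nsinc (x : ℝ) : ℝ :=
  if x = 0 then 1 else Real.sin (π * x) / (π * x)

/-- The Fejér kernel `F(x) = (1/2) sinc²(x/2)`. -/
noncomputable def Fejer (x : ℝ) : ℝ := (1 / 2) * (nsinc (x / 2)) ^ 2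

/-- The discrete absolute moment of order `β` (valued in `ℝ≥0∞`). -/
noncomputable def Dmom (χ : ℝ → ℝ) (β : ℝ) : ENNReal :=
  ⨆ u : ℝ, ∑' k : ℤ, ENNReal.ofReal (|u - (k : ℝ)| ^ β * |χ (u - (k : ℝ))|)

lemma Fejer_nonneg (x : ℝ) : 0 ≤ Fejer x := by
  unfold Fejer; positivity

lemma nsinc_sq_le_one (x : ℝ) : (nsinc x) ^ 2 ≤ 1 := by
  unfold nsinc
  split_ifs with h
  · norm_num
  · rw [sq_le_one_iff_abs_le_one, abs_div]
    apply div_le_one_of_le₀ (Real.abs_sin_le_abs) (abs_nonneg _)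

lemma Fejer_le_half (x : ℝ) : Fejer x ≤ 1 / 2 := by
  unfold Fejer
  nlinarith [nsinc_sq_le_one (x / 2)]

lemma Fejer_le_inv_sq {x : ℝ} (hx : x ≠ 0) : Fejer x ≤ 2 / (π ^ 2 * x ^ 2) := by
  have hx2 : x / 2 ≠ 0 := by simpa using hx
  have hπ : 0 < π := pi_pos
  rw [Fejer, nsinc, if_neg hx2, div_pow]
  have hd : (π * (x / 2)) ^ 2 = π ^ 2 * x ^ 2 / 4 := by ring
  have hdpos : (0:ℝ) < π ^ 2 * x ^ 2 / 4 := by positivity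
  calc (1/2 : ℝ) * (Real.sin (π * (x/2)) ^ 2 / (π * (x/2)) ^ 2)
      ≤ (1/2) * (1 / (π ^ 2 * x ^ 2 / 4)) := by
        rw [hd]; gcongr; exact Real.sin_sq_le_one _
    _ = 2 / (π ^ 2 * x ^ 2) := by
        field_simp
        ring


lemma two_rpow_ge {β : ℝ} (hβ0 : 0 ≤ β) : (1/4 : ℝ) ≤ (2:ℝ) ^ (β - 2) := by
  have h1 : (2:ℝ) ^ (-2:ℝ) ≤ (2:ℝ) ^ (β - 2) :=
    Real.rpow_le_rpow_of_exponent_le one_le_two (by linarith)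
  have h2 : (2:ℝ) ^ (-2:ℝ) = 1/4 := by
    rw [show (-2:ℝ) = ((-2 : ℤ) : ℝ) by norm_num, Real.rpow_intCast]
    norm_num
  rw [h2] at h1
  exact h1

lemma key_bound {β : ℝ} (hβ0 : 0 ≤ β) (hβ1 : β ≤ 1) (x : ℝ) :
    |x| ^ β * |Fejer x| ≤ 2 * (1 + |x|) ^ (β - 2) := by
  rw [abs_of_nonneg (Fejer_nonneg x)]
  have hb2 := two_rpow_ge hβ0
  rcases le_or_gt |x| 1 with h | h
  · have h1 : |x| ^ β ≤ 1 := Real.rpow_le_one (abs_nonneg x) h hβ0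
    have h3 : Fejer x ≤ 1/2 := Fejer_le_half x
    have hlhs : |x| ^ β * Fejer x ≤ 1/2 := by
      calc |x| ^ β * Fejer x ≤ 1 * (1/2) :=
            mul_le_mul h1 h3 (Fejer_nonneg x) zero_le_one
        _ = 1/2 := by norm_num
    have hmono : (2:ℝ) ^ (β - 2) ≤ (1 + |x|) ^ (β - 2) := by
      apply Real.rpow_le_rpow_of_nonpos (by positivity) (by linarith) (by linarith)
    linarith
  · have hx0 : x ≠ 0 := by
      intro h0; rw [h0, abs_zero] at h; linarith
    have habs : 0 < |x| := abs_pos.mpr hx0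
    have hF := Fejer_le_inv_sq hx0
    have hπ : 0 < π := pi_pos
    have hx2 : x ^ 2 = |x| ^ (2:ℝ) := by
      rw [← sq_abs, ← Real.rpow_natCast |x| 2]; norm_num
    have step1 : |x| ^ β * Fejer x ≤ (2 / π ^ 2) * |x| ^ (β - 2) := by
      calc |x| ^ β * Fejer x ≤ |x| ^ β * (2 / (π ^ 2 * x ^ 2)) := by
            apply mul_le_mul_of_nonneg_left hF (Real.rpow_nonneg (abs_nonneg x) β)
        _ = (2 / π ^ 2) * (|x| ^ β / |x| ^ (2:ℝ)) := by
            rw [hx2]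
            have h2 : (0:ℝ) < |x| ^ (2:ℝ) := Real.rpow_pos_of_pos habs 2
            field_simp
        _ = (2 / π ^ 2) * |x| ^ (β - 2) := by rw [← Real.rpow_sub habs]
    have hπ2 : (2:ℝ) / π ^ 2 ≤ 1/2 := by
      rw [div_le_iff₀ (by positivity)]
      nlinarith [pi_gt_three]
    have hmono : (2 * |x|) ^ (β - 2) ≤ (1 + |x|) ^ (β - 2) :=
      Real.rpow_le_rpow_of_nonpos (by positivity) (by linarith) (by linarith)
    have hmul : (2 * |x|) ^ (β - 2) = 2 ^ (β - 2) * |x| ^ (β - 2) :=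
      Real.mul_rpow (by norm_num) (abs_nonneg x)
    have hr : (0:ℝ) ≤ |x| ^ (β - 2) := Real.rpow_nonneg (abs_nonneg x) _
    nlinarith

lemma dmom_le {β : ℝ} (hβ0 : 0 < β) (hβ1 : β < 1) :
    Dmom Fejer β ≤ ∑' j : ℤ, ENNReal.ofReal (2 * (max |(j:ℝ)| 1) ^ (β - 2)) := by
  apply iSup_le
  intro u
  have hre := Equiv.tsum_eq (Equiv.addLeft (⌊u⌋ : ℤ))
    (fun k : ℤ => ENNReal.ofReal (|u - (k:ℝ)| ^ β * |Fejer (u - (k:ℝ))|))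
  simp only [Equiv.coe_addLeft] at hre
  rw [← hre]
  apply ENNReal.tsum_le_tsum
  intro j
  apply ENNReal.ofReal_le_ofReal
  set x := u - ((⌊u⌋ + j : ℤ) : ℝ) with hx
  have hxabs : (0:ℝ) ≤ |x| := abs_nonneg x
  have h1 : max |(j:ℝ)| 1 ≤ 1 + |x| := by
    have hfl : (⌊u⌋ : ℝ) ≤ u := Int.floor_le u
    have hfl2 : u < ⌊u⌋ + 1 := Int.lt_floor_add_one u
    have hj : (j:ℝ) = (u - ⌊u⌋) - x := by rw [hx]; push_cast; ring
    have htri : |(j:ℝ)| ≤ |u - (⌊u⌋:ℝ)| + |x| := by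
      rw [hj, sub_eq_add_neg]
      exact le_trans (abs_add_le _ _) (by rw [abs_neg])
    have habsu : |u - (⌊u⌋:ℝ)| ≤ 1 := by
      rw [abs_of_nonneg (by linarith)]; linarith
    apply max_le (by linarith) (by linarith)
  calc |x| ^ β * |Fejer x| ≤ 2 * (1 + |x|) ^ (β - 2) := key_bound hβ0.le hβ1.le x
    _ ≤ 2 * (max |(j:ℝ)| 1) ^ (β - 2) := by
        have hpos : (0:ℝ) < max |(j:ℝ)| 1 := lt_of_lt_of_le zero_lt_one (le_max_right _ _)
        have h2 := Real.rpow_le_rpow_of_nonpos hpos h1 (show β - 2 ≤ 0 by linarith)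
        linarith

lemma Csum_lt_top {β : ℝ} (hβ0 : 0 < β) (hβ1 : β < 1) :
    ∑' j : ℤ, ENNReal.ofReal (2 * (max |(j:ℝ)| 1) ^ (β - 2)) < ⊤ := by
  rw [ENNReal.tsum_eq_add_tsum_ite (0:ℤ)]
  apply ENNReal.add_lt_top.mpr
  refine ⟨ENNReal.ofReal_lt_top, ?_⟩
  have hle : ∀ j : ℤ, (if j = 0 then 0 else ENNReal.ofReal (2 * (max |(j:ℝ)| 1) ^ (β - 2)))
      ≤ ENNReal.ofReal (2 * |(j:ℝ)| ^ (-(2 - β))) := by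
    intro j
    split_ifs with h
    · exact zero_le
    · apply ENNReal.ofReal_le_ofReal
      have h1 : (1:ℝ) ≤ |(j:ℝ)| := by
        rw [← Int.cast_abs]
        exact_mod_cast Int.one_le_abs h
      rw [max_eq_left h1, show β - 2 = -(2 - β) by ring]
  refine lt_of_le_of_lt (ENNReal.tsum_le_tsum fun j => le_trans (le_of_eq (by congr)) (hle j)) ?_
  rw [← ENNReal.ofReal_tsum_of_nonneg (fun j : ℤ => by positivity)
    ((Real.summable_abs_int_rpow (show (1:ℝ) < 2 - β by linarith)).mul_left 2)]
  exact ENNReal.ofReal_lt_top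

lemma fejer_neg_odd (n : ℕ) :
    Fejer (-(2*(n:ℝ)+1)) = 2 / (π ^ 2 * (2*(n:ℝ)+1) ^ 2) := by
  have hπ := pi_pos
  have hm : (0:ℝ) < 2*(n:ℝ)+1 := by positivity
  have hy : (-(2*(n:ℝ)+1))/2 ≠ 0 := div_ne_zero (neg_ne_zero.mpr hm.ne') two_ne_zero
  rw [Fejer, nsinc, if_neg hy, div_pow]
  have harg : π * ((-(2*(n:ℝ)+1))/2) = -((n:ℝ)*π + π/2) := by ring
  have hs : Real.sin (π * ((-(2*(n:ℝ)+1))/2)) ^ 2 = 1 := by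
    rw [harg, Real.sin_neg, neg_sq, Real.sin_add_pi_div_two]
    have h0 : Real.sin ((n:ℝ)*π) = 0 := Real.sin_nat_mul_pi n
    have h1 := Real.sin_sq_add_cos_sq ((n:ℝ)*π)
    rw [h0] at h1
    nlinarith
  rw [hs]
  have hd : (π * ((-(2*(n:ℝ)+1))/2)) ^ 2 = π ^ 2 * (2*(n:ℝ)+1) ^ 2 / 4 := by ring
  rw [hd]
  field_simp
  ring

lemma dmom_one : Dmom Fejer 1 = ⊤ := by
  apply eq_top_iff.mpr
  refine le_trans ?_ (le_iSup
    (fun u : ℝ => ∑' k : ℤ, ENNReal.ofReal (|u - (k:ℝ)| ^ (1:ℝ) * |Fejer (u - (k:ℝ))|)) (0:ℝ))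
  have hinj : Function.Injective (fun n : ℕ => (2*(n:ℤ)+1)) := by
    intro a b hab
    simp only at hab
    omega
  refine le_trans ?_ (ENNReal.tsum_comp_le_tsum_of_injective hinj
    (fun k : ℤ => ENNReal.ofReal (|(0:ℝ) - (k:ℝ)| ^ (1:ℝ) * |Fejer ((0:ℝ) - (k:ℝ))|)))
  have hπ := pi_pos
  have hterm : ∀ n : ℕ, ENNReal.ofReal (1/(π^2*((n:ℝ)+1)))
      ≤ ENNReal.ofReal (|(0:ℝ) - ((2*(n:ℤ)+1 : ℤ):ℝ)| ^ (1:ℝ)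
          * |Fejer ((0:ℝ) - ((2*(n:ℤ)+1 : ℤ):ℝ))|) := by
    intro n
    apply ENNReal.ofReal_le_ofReal
    have hm : (0:ℝ) < 2*(n:ℝ)+1 := by positivity
    have hval : (0:ℝ) - ((2*(n:ℤ)+1 : ℤ):ℝ) = -(2*(n:ℝ)+1) := by push_cast; ring
    rw [hval, Real.rpow_one, abs_neg, abs_of_pos hm, fejer_neg_odd n,
      abs_of_pos (by positivity)]
    rw [show (2*(n:ℝ)+1) * (2 / (π ^ 2 * (2*(n:ℝ)+1) ^ 2)) = 2 / (π ^ 2 * (2*(n:ℝ)+1)) by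
      field_simp]
    rw [div_le_div_iff₀ (by positivity) (by positivity)]
    nlinarith
  have htop : ∑' n : ℕ, ENNReal.ofReal (1/(π^2*((n:ℝ)+1))) = ⊤ := by
    by_contra h
    have hs := ENNReal.summable_toReal h
    have hs2 : Summable (fun n : ℕ => 1/(π^2*((n:ℝ)+1))) := by
      refine hs.congr fun n => ?_
      exact ENNReal.toReal_ofReal (by positivity)
    have hs3 : Summable (fun n : ℕ => 1/((n:ℝ)+1)) := by
      refine (hs2.mul_left (π^2)).congr fun n => ?_
      field_simp
    have hs4 : Summable (fun n : ℕ => 1/((n:ℝ))) := by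
      rw [← summable_nat_add_iff 1]
      refine hs3.congr fun n => ?_
      push_cast
      ring
    exact Real.not_summable_one_div_natCast hs4
  calc (⊤ : ENNReal) = ∑' n : ℕ, ENNReal.ofReal (1/(π^2*((n:ℝ)+1))) := htop.symm
    _ ≤ _ := ENNReal.tsum_le_tsum hterm

theorem fejer_moments :
    (∀ β : ℝ, 0 < β → β < 1 → Dmom Fejer β < ⊤) ∧ Dmom Fejer 1 = ⊤ :=
  ⟨fun _ h1 h2 => lt_of_le_of_lt (dmom_le h1 h2) (Csum_lt_top h1 h2), dmom_one⟩
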